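/- arXiv:2210.12024 — 7 statements merged into one kernel-verified Lean document; each statement's English description precedes it below -/
import Mathlib

section
/- Let k be a field and let R = k[x, y, y^{-1}]/(x^2) be the quotient of the Laurent-polynomial extension k[x][y, y^{-1}] by the ideal generated by x^2. Let σ be the k-algebra automorphism of R determined by σ(x) = xy and σ(y) = y. Then σ does not preserve a frame of R; indeed, the elements σ^i(x) = x y^i for i ≥ 0 span an infinite-dimensional k-subspace of R, so x lies in no σ-invariant frame. -/
noncomputable section

open LaurentPolynomial Polynomial

/-- The ring `R = k[x, y, y⁻¹]/(x²)`, realized as the quotient of the ring of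
Laurent polynomials over `k[x]` by the ideal generated by `x²`. -/
abbrev ExampleRing (k : Type*) [Field k] : Type _ :=
  LaurentPolynomial (Polynomial k) ⧸
    (Ideal.span {LaurentPolynomial.C (Polynomial.X : Polynomial k) ^ 2})

/-- A frame of a `k`-algebra `R` is a finite-dimensional `k`-subspace `V` of `R`
such that `1 ∈ V` and `V` generates `R` as a `k`-algebra. -/
def IsFrame (k : Type*) {R : Type*} [Field k] [Ring R] [Algebra k R]
    (V : Submodule k R) : Prop :=
  (1 : R) ∈ V ∧ FiniteDimensional k V ∧ Algebra.adjoin k (V : Set R) = ⊤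

/-!
Put `L = k[T, T⁻¹]` and let `φ : R → L[ε]` be the algebra map with `x ↦ ε` and `y ↦ T`. Its
`ε`-coefficient `π` is `k`-linear with `π x = 1`, and `π ∘ σ = T · π` because `φ ∘ σ` and
`(a + bε ↦ a + Tbε) ∘ φ` are algebra maps agreeing on `x` and `y`. The elements with `π = 0` form
a subalgebra, so a generating subspace `V` has `π V ≠ 0`. If `V` is `σ`-stable, `π V` is stable
under multiplication by `T`, so with `w ≠ 0` it contains `w, T w, T² w, …`, which are linearly
independent; hence `V` is infinite-dimensional. The same argument applies to the `σ`-stable span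
of the `σⁱ x`.
-/

open DualNumber TrivSqZeroExt

theorem LaurentPolynomial.linearIndependent_T_mul {R : Type*} [CommRing R] [IsDomain R]
    {w : R[T;T⁻¹]} (hw : w ≠ 0) : LinearIndependent R fun i : ℕ => T i * w := by
  have hT : LinearIndependent R fun n : ℤ => (T n : R[T;T⁻¹]) := by
    convert (AddMonoidAlgebra.basis ℤ R).linearIndependent using 1
    exact funext fun n => (AddMonoidAlgebra.basis_apply R n).symm
  exact (hT.comp _ Nat.cast_injective).map' (LinearMap.mulRight R w)
    (LinearMap.ker_eq_bot.2 (mul_left_injective₀ hw))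

theorem not_finiteDimensional_of_apply_eq_T_mul {k M : Type*} [Field k] [AddCommGroup M]
    [Module k M] (π : M →ₗ[k] k[T;T⁻¹]) {s : M → M} (hs : ∀ m, π (s m) = T 1 * π m)
    {U : Submodule k M} (hU : ∀ u ∈ U, s u ∈ U) {u : M} (hu : u ∈ U) (hπu : π u ≠ 0) :
    ¬ FiniteDimensional k U := by
  have hmem (i : ℕ) : s^[i] u ∈ U := by
    induction i with
    | zero => exact hu
    | succ i ih => exact Function.iterate_succ_apply' s i u ▸ hU _ ih
  have hπ (i : ℕ) : π (s^[i] u) = T i * π u := by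
    induction i with
    | zero => rw [Function.iterate_zero_apply, Nat.cast_zero, T_zero, one_mul]
    | succ i ih => rw [Function.iterate_succ_apply', hs, ih, ← mul_assoc, ← T_add, add_comm,
        Nat.cast_succ]
  have hli : LinearIndependent k fun i => (⟨s^[i] u, hmem i⟩ : U) :=
    .of_comp (π ∘ₗ U.subtype) (by simpa only [Function.comp_def, LinearMap.comp_apply,
      Submodule.subtype_apply, hπ] using linearIndependent_T_mul hπu)
  exact fun _ => Module.Finite.not_linearIndependent_of_infinite _ hli

theorem LaurentPolynomial.ringHom_ext {R S : Type*} [Semiring R] [Semiring S]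
    {f g : R[T;T⁻¹] →+* S} (hC : ∀ a, f (C a) = g (C a)) (hT : f (T 1) = g (T 1)) : f = g :=
  AddMonoidAlgebra.ringHom_ext' (RingHom.ext hC) (MonoidHom.ext_mint hT)

namespace ExampleRing

variable (k : Type*) [Field k]

abbrev x : ExampleRing k := Ideal.Quotient.mk _ (LaurentPolynomial.C X)

abbrev y : ExampleRing k := Ideal.Quotient.mk _ (T 1)

def laurentToDualNumber : k[X][T;T⁻¹] →ₐ[k] k[T;T⁻¹][ε] where
  __ := LaurentPolynomial.eval₂ (aeval ε).toRingHom
    ((isUnit_T 1).unit.map (inlHom k[T;T⁻¹] k[T;T⁻¹]).toMonoidHom)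
  commutes' c := by simp [LaurentPolynomial.algebraMap_apply]

def toDualNumber : ExampleRing k →ₐ[k] k[T;T⁻¹][ε] :=
  Ideal.Quotient.liftₐ _ (laurentToDualNumber k) fun a ha => by
    obtain ⟨b, rfl⟩ := Ideal.mem_span_singleton'.1 ha
    simp [laurentToDualNumber]

@[simp] lemma laurentToDualNumber_C (p : k[X]) :
    laurentToDualNumber k (LaurentPolynomial.C p) = aeval ε p :=
  LaurentPolynomial.eval₂_C _ _ p

@[simp] lemma laurentToDualNumber_T_one :
    laurentToDualNumber k (T 1) = inl (T 1) := by
  simp [laurentToDualNumber]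

@[simp] lemma toDualNumber_x : toDualNumber k (x k) = ε :=
  (laurentToDualNumber_C k X).trans (aeval_X ε)

@[simp] lemma toDualNumber_y : toDualNumber k (y k) = inl (T 1) :=
  laurentToDualNumber_T_one k

theorem algHom_ext {B : Type*} [Semiring B] [Algebra k B] {f g : ExampleRing k →ₐ[k] B}
    (hx : f (x k) = g (x k)) (hy : f (y k) = g (y k)) : f = g := by
  refine Ideal.Quotient.algHom_ext k (AlgHom.coe_ringHom_injective ?_)
  refine LaurentPolynomial.ringHom_ext (fun p => ?_) hy
  have : ((f.comp (Ideal.Quotient.mkₐ k _)).toRingHom.comp LaurentPolynomial.C : k[X] →+* B) =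
      (g.comp (Ideal.Quotient.mkₐ k _)).toRingHom.comp LaurentPolynomial.C :=
    Polynomial.ringHom_ext (fun a => (f.commutes a).trans (g.commutes a).symm) hx
  exact RingHom.congr_fun this p

def xCoeff : ExampleRing k →ₗ[k] k[T;T⁻¹] :=
  ((sndHom _ _).restrictScalars k).comp (toDualNumber k).toLinearMap

lemma xCoeff_apply (r : ExampleRing k) : xCoeff k r = (toDualNumber k r).snd := rfl

lemma xCoeff_x : xCoeff k (x k) = 1 := by
  simp [xCoeff_apply]

lemma xCoeff_apply_eq_T_mul (σ : ExampleRing k →ₐ[k] ExampleRing k)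
    (hσx : σ (x k) = x k * y k) (hσy : σ (y k) = y k) (r : ExampleRing k) :
    xCoeff k (σ r) = T 1 * xCoeff k r := by
  have : (toDualNumber k).comp σ =
      ((TrivSqZeroExt.map (LinearMap.mulLeft k[T;T⁻¹] (T 1))).restrictScalars k).comp
        (toDualNumber k) :=
    algHom_ext k (by ext <;> simp [hσx]) (by simp [hσy])
  simpa [xCoeff_apply] using congr((snd ($this r)))

lemma exists_xCoeff_ne_zero_of_adjoin_eq_top {V : Submodule k (ExampleRing k)}
    (hV : Algebra.adjoin k (V : Set (ExampleRing k)) = ⊤) : ∃ v ∈ V, xCoeff k v ≠ 0 := by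
  by_contra! h
  have hle : Algebra.adjoin k (V : Set (ExampleRing k)) ≤
      (inlAlgHom k k[T;T⁻¹] k[T;T⁻¹]).range.comap (toDualNumber k) :=
    Algebra.adjoin_le fun v hv => ⟨(toDualNumber k v).fst, TrivSqZeroExt.ext rfl (h v hv).symm⟩
  obtain ⟨a, ha⟩ := hle (hV ▸ Algebra.mem_top (x := x k))
  simpa using congr(snd $ha)

end ExampleRing

/-- Let `R = k[x, y^{±1}]/(x²)` and let `σ` be the `k`-algebra automorphism of `R`
with `σ(x) = x y` and `σ(y) = y`.  Then `σ` does not preserve a frame of `R`;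
indeed the elements `σ^i(x) = x yⁱ` span an infinite-dimensional subspace of `R`. -/
theorem no_sigma_invariant_frame (k : Type*) [Field k]
    (x y : ExampleRing k)
    (hx : x = Ideal.Quotient.mk _ (LaurentPolynomial.C (Polynomial.X : Polynomial k)))
    (hy : y = Ideal.Quotient.mk _ (LaurentPolynomial.T 1))
    (σ : ExampleRing k ≃ₐ[k] ExampleRing k)
    (hσx : σ x = x * y) (hσy : σ y = y) :
    (¬ ∃ V : @Submodule k (ExampleRing k) _ _ Algebra.toModule, IsFrame k V ∧ V.map σ.toLinearMap = V) ∧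
      ¬ FiniteDimensional k
        (Submodule.span k (Set.range fun i : ℕ => (σ ^ i) x)) := by
  subst hx hy
  have hσ := ExampleRing.xCoeff_apply_eq_T_mul k σ hσx hσy
  refine ⟨fun ⟨V, ⟨_, hV, hgen⟩, hσV⟩ => ?_, ?_⟩
  · obtain ⟨v, hv, hv0⟩ := ExampleRing.exists_xCoeff_ne_zero_of_adjoin_eq_top k hgen
    exact not_finiteDimensional_of_apply_eq_T_mul _ hσ
      (fun u hu => hσV ▸ Submodule.mem_map_of_mem hu) hv hv0 hV
  · set S := Submodule.span k (Set.range fun i : ℕ => (σ ^ i) (ExampleRing.x k))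
    have hstable : S ≤ S.comap σ.toLinearMap := Submodule.span_le.2 <| by
      rintro _ ⟨i, rfl⟩
      exact Submodule.subset_span ⟨i + 1, by simp [pow_succ']⟩
    exact not_finiteDimensional_of_apply_eq_T_mul _ hσ hstable
      (Submodule.subset_span ⟨0, rfl⟩) (ExampleRing.xCoeff_x k ▸ one_ne_zero)
end
end

section
/- Let k be a field, let S be a k-algebra, and let σ be a k-algebra automorphism of S that preserves a frame of S. If R is a finitely generated k-subalgebra of S with σ(R) = R, then the restriction of σ to R preserves a frame of R. (Concretely, if V is a frame of R and W is a σ-invariant frame of S, then V ⊆ W^N for some N, and W^N ∩ R is a σ-invariant frame of R.) -/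
/-- Let `σ` be a `k`-algebra automorphism of `S` preserving a frame of `S`, and let
`R` be a finitely generated `k`-subalgebra of `S` with `σ(R) = R`.  Then the
restriction of `σ` to `R` preserves a frame of `R`: there is a finite-dimensional
`σ`-invariant subspace `V ⊆ R` with `1 ∈ V` generating `R` as a `k`-algebra. -/
theorem restriction_preserves_frame_of_subalgebra
    (k S : Type*) [Field k] [Ring S] [Algebra k S]
    (σ : S ≃ₐ[k] S)
    (hσ : ∃ W : Submodule k S, IsFrame k W ∧ W.map σ.toLinearMap = W)
    (R : Subalgebra k S) (hRfg : R.FG)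
    (hRinv : R.map σ.toAlgHom = R) :
    ∃ V : Submodule k S, V ≤ Subalgebra.toSubmodule R ∧ (1 : S) ∈ V ∧
      FiniteDimensional k V ∧ Algebra.adjoin k (V : Set S) = R ∧
      V.map σ.toLinearMap = V := by
  obtain ⟨W, ⟨h1W, hWfd, hWadj⟩, hWinv⟩ := hσ
  obtain ⟨t, ht⟩ := hRfg
  have hmono : Monotone fun n => W ^ n := by
    apply monotone_nat_of_le_succ
    intro n x hx
    rw [pow_succ]
    simpa using Submodule.mul_mem_mul hx h1W
  have hdir : Directed (· ≤ ·) fun n => W ^ n := hmono.directed_le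
  have htop : ∀ x : S, ∃ n, x ∈ W ^ n := by
    intro x
    have hx : x ∈ Algebra.adjoin k (W : Set S) := hWadj ▸ Algebra.mem_top
    have hx' : x ∈ Submodule.span k (Submonoid.closure (W : Set S) : Set S) := by
      rwa [← Algebra.adjoin_eq_span]
    rw [← Submodule.mem_iSup_of_directed _ hdir]
    refine Submodule.span_le.mpr ?_ hx'
    intro y hy
    induction hy using Submonoid.closure_induction with
    | mem z hz =>
      exact (Submodule.mem_iSup_of_directed _ hdir).mpr ⟨1, by simpa using hz⟩
    | one =>
      exact (Submodule.mem_iSup_of_directed _ hdir).mpr ⟨1, by simpa using h1W⟩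
    | mul a b _ _ ha hb =>
      obtain ⟨m, hm⟩ := (Submodule.mem_iSup_of_directed _ hdir).mp ha
      obtain ⟨n, hn⟩ := (Submodule.mem_iSup_of_directed _ hdir).mp hb
      exact (Submodule.mem_iSup_of_directed _ hdir).mpr
        ⟨m + n, by rw [pow_add]; exact Submodule.mul_mem_mul hm hn⟩
  have key : ∀ u : Finset S, ∃ N, (u : Set S) ⊆ (W ^ N : Submodule k S) := by
    classical
    intro u
    induction u using Finset.induction with
    | empty => exact ⟨0, by simp⟩
    | @insert a u ha ih =>
      obtain ⟨N, hN⟩ := ih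
      obtain ⟨M, hM⟩ := htop a
      refine ⟨max N M, ?_⟩
      intro y hy
      rcases Finset.mem_insert.mp (by exact_mod_cast hy) with rfl | hy'
      · exact hmono (le_max_right N M) hM
      · exact hmono (le_max_left N M) (hN hy')
  obtain ⟨N, hN⟩ := key t
  have hWfg : W.FG := (W.fg_iff_finiteDimensional).mpr hWfd
  have hWNfg : (W ^ N).FG := hWfg.pow N
  haveI : FiniteDimensional k (W ^ N : Submodule k S) :=
    ((W ^ N).fg_iff_finiteDimensional).mp hWNfg
  refine ⟨W ^ N ⊓ Subalgebra.toSubmodule R, inf_le_right, ?_, ?_, ?_, ?_⟩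
  · exact ⟨by simpa using Submodule.pow_mem_pow W h1W N, R.one_mem⟩
  · exact Submodule.finiteDimensional_of_le inf_le_left
  · apply le_antisymm
    · apply Algebra.adjoin_le
      intro x hx
      exact (inf_le_right : W ^ N ⊓ Subalgebra.toSubmodule R ≤ _) hx
    · rw [← ht]
      apply Algebra.adjoin_mono
      intro x hx
      exact ⟨hN hx, ht ▸ Algebra.subset_adjoin hx⟩
  · have h1 : (W ^ N).map σ.toLinearMap = W ^ N := by
      have h : Submodule.map σ.toLinearMap (W ^ N) =
          (Submodule.map σ.toLinearMap W) ^ N := Submodule.map_pow W σ.toAlgHom N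
      rw [h, hWinv]
    have h2 : (Subalgebra.toSubmodule R).map σ.toLinearMap = Subalgebra.toSubmodule R := by
      have h : Submodule.map σ.toLinearMap (Subalgebra.toSubmodule R) =
          Subalgebra.toSubmodule (R.map σ.toAlgHom) :=
        (Subalgebra.map_toSubmodule (S := R) (f := σ.toAlgHom)).symm
      rw [h, hRinv]
    rw [Submodule.map_inf σ.toLinearMap σ.injective, h1, h2]
end

section
/- Let k be a field, let R be a finitely generated k-algebra, let σ be a k-algebra automorphism of R, and let I_1, …, I_s be two-sided ideals of R with σ(I_i) = I_i for each i and I_1 ∩ ⋯ ∩ I_s = (0). If for each i the automorphism of R/I_i induced by σ preserves a frame of R/I_i, then σ preserves a frame of R. -/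
section Aux
variable {k A : Type*} [Field k] [Ring A] [Algebra k A] {W : Submodule k A}

lemma one_mem_pow (h1 : (1:A) ∈ W) : ∀ n, (1:A) ∈ W ^ n
  | 0 => by
      rw [pow_zero, Submodule.one_eq_span]
      exact Submodule.mem_span_singleton_self 1
  | (n+1) => by
      rw [pow_succ]
      simpa using Submodule.mul_mem_mul (one_mem_pow h1 n) h1

lemma pow_mono_of_one_mem (h1 : (1:A) ∈ W) : Monotone (fun n => W ^ n) := by
  apply monotone_nat_of_le_succ
  intro n x hx
  rw [pow_succ]
  simpa using Submodule.mul_mem_mul hx h1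

lemma exists_mem_pow (h1 : (1:A) ∈ W) (hadj : Algebra.adjoin k (W : Set A) = ⊤)
    (x : A) : ∃ n, x ∈ W ^ n := by
  have hx : x ∈ Algebra.adjoin k (W : Set A) := hadj ▸ Algebra.mem_top
  induction hx using Algebra.adjoin_induction with
  | mem y hy => exact ⟨1, by simpa [pow_one] using hy⟩
  | algebraMap r =>
      exact ⟨1, by simpa [pow_one, Algebra.algebraMap_eq_smul_one] using W.smul_mem r h1⟩
  | add y z _ _ hy hz =>
      obtain ⟨m, hm⟩ := hy; obtain ⟨n, hn⟩ := hz
      exact ⟨max m n, add_mem (pow_mono_of_one_mem h1 (le_max_left m n) hm)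
        (pow_mono_of_one_mem h1 (le_max_right m n) hn)⟩
  | mul y z _ _ hy hz =>
      obtain ⟨m, hm⟩ := hy; obtain ⟨n, hn⟩ := hz
      exact ⟨m + n, by rw [pow_add]; exact Submodule.mul_mem_mul hm hn⟩

end Aux


/-- Let `R` be a finitely generated `k`-algebra, `σ` a `k`-algebra automorphism of `R`,
and let `I_1, …, I_s` be `σ`-invariant two-sided ideals of `R` with trivial
intersection.  The quotients `R/I_i` are encoded by surjective `k`-algebra
homomorphisms `π i : R → S i` whose kernels intersect trivially, and the induced
automorphisms of `R/I_i` by automorphisms `σ' i` of `S i` with `π i ∘ σ = σ' i ∘ π i`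
(this in particular encodes `σ(I_i) = I_i`).  If each induced automorphism `σ' i`
preserves a frame of `S i`, then `σ` preserves a frame of `R`. -/
theorem sigma_preserves_frame_of_quotients
    (k R : Type*) [Field k] [Ring R] [Algebra k R] [Algebra.FiniteType k R]
    (σ : R ≃ₐ[k] R)
    (s : ℕ) (S : Fin s → Type*) [∀ i, Ring (S i)] [∀ i, Algebra k (S i)]
    (π : ∀ i, R →ₐ[k] S i)
    (hsurj : ∀ i, Function.Surjective (π i))
    (σ' : ∀ i, S i ≃ₐ[k] S i)
    (hcomm : ∀ i (r : R), π i (σ r) = σ' i (π i r))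
    (hker : ∀ r : R, (∀ i, π i r = 0) → r = 0)
    (hframe : ∀ i, ∃ W : Submodule k (S i),
      IsFrame k W ∧ W.map (σ' i).toLinearMap = W) :
    ∃ V : Submodule k R, IsFrame k V ∧ V.map σ.toLinearMap = V := by
  simp only [IsFrame] at hframe
  choose W hWtriple hWmap using hframe
  have hW1 := fun i => (hWtriple i).1
  have hWfd := fun i => (hWtriple i).2.1
  have hWadj := fun i => (hWtriple i).2.2
  obtain ⟨t, ht⟩ : (⊤ : Subalgebra k R).FG := Algebra.FiniteType.out
  -- for each i find an exponent n i with π i '' t ⊆ (W i) ^ (n i)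
  have hex : ∀ i (x : R), ∃ n, π i x ∈ W i ^ n := fun i x =>
    exists_mem_pow (hW1 i) (hWadj i) (π i x)
  choose f hf using hex
  set n : Fin s → ℕ := fun i => t.sup (f i) with hn
  set W' : ∀ i, Submodule k (S i) := fun i => W i ^ (n i) with hW'
  have hW'1 : ∀ i, (1 : S i) ∈ W' i := fun i => one_mem_pow (hW1 i) _
  have hW'fd : ∀ i, FiniteDimensional k (W' i) := fun i =>
    Module.Finite.iff_fg.mpr ((Module.Finite.iff_fg.mp (hWfd i)).pow _)
  have hW'map : ∀ i, (W' i).map (σ' i).toLinearMap = W' i := by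
    intro i
    have : (σ' i).toLinearMap = ((σ' i : S i →ₐ[k] S i)).toLinearMap := rfl
    rw [hW', this, Submodule.map_pow]
    rw [← this, hWmap]
  have hW'mem : ∀ i (x : S i), σ' i x ∈ W' i ↔ x ∈ W' i := by
    intro i x
    constructor
    · intro hx
      rw [← hW'map i] at hx
      obtain ⟨y, hy, hxy⟩ := hx
      have : y = x := (σ' i).injective hxy
      rwa [← this]
    · intro hx
      rw [← hW'map i]
      exact ⟨x, hx, rfl⟩
  set V : Submodule k R := ⨅ i, (W' i).comap (π i).toLinearMap with hV
  have hVmem : ∀ r : R, r ∈ V ↔ ∀ i, π i r ∈ W' i := by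
    intro r
    simp [hV, Submodule.mem_iInf]
  have htV : (t : Set R) ⊆ V := by
    intro x hx
    rw [SetLike.mem_coe, hVmem]
    intro i
    exact pow_mono_of_one_mem (hW1 i) (Finset.le_sup hx) (hf i x)
  refine ⟨V, ⟨?_, ?_, ?_⟩, ?_⟩
  · rw [hVmem]
    intro i
    simpa using hW'1 i
  · -- finite-dimensionality via injection into ∏ W' i
    have : ∀ i, FiniteDimensional k (W' i) := hW'fd
    let φ : V →ₗ[k] (∀ i, W' i) :=
      { toFun := fun v => fun i => ⟨π i v, (hVmem v).mp v.2 i⟩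
        map_add' := fun x y => by ext i; simp
        map_smul' := fun c x => by ext i; simp }
    have hφ : Function.Injective φ := by
      intro x y hxy
      apply Subtype.ext
      apply sub_eq_zero.mp ∘ hker _
      intro i
      have := congrFun hxy i
      simp only [φ, LinearMap.coe_mk, AddHom.coe_mk, Subtype.ext_iff] at this
      simp [map_sub, this]
    exact Module.Finite.of_injective φ hφ
  · rw [eq_top_iff, ← ht]
    exact Algebra.adjoin_le_iff.mpr (le_trans htV (Algebra.subset_adjoin))
  · apply le_antisymm
    · rintro x ⟨y, hy, rfl⟩
      rw [AlgEquiv.toLinearMap_apply, hVmem]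
      intro i
      rw [hcomm, hW'mem]
      exact (hVmem y).mp hy i
    · intro x hx
      refine ⟨σ.symm x, ?_, by simp⟩
      show σ.symm x ∈ V
      rw [hVmem]
      intro i
      rw [← hW'mem i, ← hcomm]
      simpa using (hVmem x).mp hx i
end

section
/- Let k be a field of characteristic zero, let R be a finitely generated commutative k-algebra, and let δ be a k-linear derivation of R. If P is a maximal ideal of R with δ(P) ⊆ P, then δ(y) ∈ P for every y ∈ R; that is, every δ-invariant maximal ideal of R contains δ(R). -/
/-!
Let `p` be the minimal polynomial over `k` of the residue of `y` in the field `R ⧸ P`, which is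
finite over `k` by the Nullstellensatz. Then `p(y) ∈ P`, so by invariance `δ(p(y)) = p'(y) δ(y)`
lies in `P`. Since `k` is perfect, `p` is separable and `p'(y) ∉ P`; as `P` is prime, `δ(y) ∈ P`.
-/

open Polynomial

namespace Derivation

variable {k R : Type*} [CommRing R]

theorem aeval_derivative_mul_mem_of_aeval_mem [CommRing k] [Algebra k R] (δ : Derivation k R R)
    {I : Ideal R} (hI : ∀ x ∈ I, δ x ∈ I) {y : R} {p : k[X]} (hp : aeval y p ∈ I) :
    aeval y (derivative p) * δ y ∈ I := by
  simpa only [comp_aeval_eq, smul_eq_mul] using hI _ hp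

theorem apply_mem_of_isSeparable_mk [Field k] [Algebra k R] (δ : Derivation k R R)
    {P : Ideal R} [P.IsPrime] (hP : ∀ x ∈ P, δ x ∈ P) {y : R}
    (hy : IsSeparable k (Ideal.Quotient.mk P y)) : δ y ∈ P := by
  set p := minpoly k (Ideal.Quotient.mk P y)
  have aeval_mk (q : k[X]) : Ideal.Quotient.mk P (aeval y q) = aeval (Ideal.Quotient.mk P y) q :=
    (aeval_algHom_apply (Ideal.Quotient.mkₐ k P) y q).symm
  have hp : aeval y p ∈ P := by
    rw [← Ideal.Quotient.eq_zero_iff_mem, aeval_mk, minpoly.aeval]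
  have hp' : aeval y (derivative p) ∉ P := by
    rw [← Ideal.Quotient.eq_zero_iff_mem, aeval_mk]
    exact hy.aeval_derivative_ne_zero (minpoly.aeval k _)
  exact (‹P.IsPrime›.mem_or_mem (aeval_derivative_mul_mem_of_aeval_mem δ hP hp)).resolve_left hp'

end Derivation

theorem Ideal.Quotient.isSeparable_of_isMaximal (k R : Type*) [Field k] [PerfectField k]
    [CommRing R] [Algebra k R] [Algebra.FiniteType k R] (P : Ideal R) [P.IsMaximal] :
    Algebra.IsSeparable k (R ⧸ P) :=
  letI := Ideal.Quotient.field P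
  haveI : Algebra.FiniteType k (R ⧸ P) :=
    .of_surjective (Ideal.Quotient.mkₐ k P) (Ideal.Quotient.mkₐ_surjective k P)
  haveI := finite_of_finite_type_of_isJacobsonRing k (R ⧸ P)
  inferInstance

/-- Let `k` be a field of characteristic zero, `R` a finitely generated commutative
`k`-algebra, and `δ` a `k`-linear derivation of `R`.  If `P` is a `δ`-invariant
maximal ideal of `R`, then `δ(y) ∈ P` for every `y ∈ R`. -/
theorem derivation_mem_of_invariant_maximal_ideal
    (k R : Type*) [Field k] [CharZero k] [CommRing R] [Algebra k R]
    [Algebra.FiniteType k R]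
    (δ : Derivation k R R)
    (P : Ideal R) (hP : P.IsMaximal) (hPinv : ∀ x ∈ P, δ x ∈ P) :
    ∀ y : R, δ y ∈ P := by
  intro y
  have := Ideal.Quotient.isSeparable_of_isMaximal k R P
  exact δ.apply_mem_of_isSeparable_mk hPinv (Algebra.IsSeparable.isSeparable k _)
end

section
/- Let k be a field of characteristic zero, let R be a finitely generated commutative k-algebra, and let δ be a nonzero k-linear derivation of R. Then the intersection of all δ-invariant maximal ideals of R is a nonzero ideal; more precisely, if y ∈ R satisfies δ(y) ≠ 0, then δ(y) lies in every δ-invariant maximal ideal of R. -/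
/-!
Let `P` be a `δ`-invariant maximal ideal and `y ∈ R`. By Zariski's lemma `R ⧸ P` is a finite
extension of `k`, hence separable since `char k = 0`, so the minimal polynomial `p` of `y mod P`
satisfies `p(y) ∈ P` and `p'(y) ∉ P`. Applying `δ` gives `p'(y) δ(y) = δ(p(y)) ∈ P`, and
primality of `P` forces `δ(y) ∈ P`.
-/

open Polynomial

namespace Derivation

variable {k R : Type*} [CommRing k] [CommRing R] [Algebra k R]
  (δ : Derivation k R R) {P : Ideal R} [P.IsPrime]

theorem apply_mem_of_aeval_mem (hP : ∀ x ∈ P, δ x ∈ P) {p : k[X]} {y : R} (hp : aeval y p ∈ P)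
    (hp' : aeval y (derivative p) ∉ P) : δ y ∈ P := by
  have h : aeval y (derivative p) * δ y ∈ P := by
    rw [← smul_eq_mul, ← δ.map_aeval]
    exact hP _ hp
  exact (‹P.IsPrime›.mem_or_mem h).resolve_left hp'

theorem apply_mem_of_isSeparable (hP : ∀ x ∈ P, δ x ∈ P) {y : R}
    (hy : IsSeparable k (Ideal.Quotient.mk P y)) : δ y ∈ P := by
  have hmk : ∀ q : k[X], Ideal.Quotient.mk P (aeval y q) = aeval (Ideal.Quotient.mk P y) q :=
    fun q ↦ by simpa using (aeval_algHom_apply (Ideal.Quotient.mkₐ k P) y q).symm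
  refine δ.apply_mem_of_aeval_mem hP (p := minpoly k (Ideal.Quotient.mk P y)) ?_ ?_
  · rw [← Ideal.Quotient.eq_zero_iff_mem, hmk, minpoly.aeval]
  · rw [← Ideal.Quotient.eq_zero_iff_mem, hmk]
    exact hy.aeval_derivative_ne_zero (minpoly.aeval k _)

end Derivation

theorem Ideal.IsMaximal.isSeparable_quotient {k R : Type*} [Field k] [CharZero k] [CommRing R]
    [Algebra k R] [Algebra.FiniteType k R] {P : Ideal R} (hP : P.IsMaximal) :
    Algebra.IsSeparable k (R ⧸ P) :=
  letI := Ideal.Quotient.field P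
  haveI : Algebra.FiniteType k (R ⧸ P) :=
    .of_surjective (Ideal.Quotient.mkₐ k P) (Ideal.Quotient.mkₐ_surjective k P)
  haveI := finite_of_finite_type_of_isJacobsonRing k (R ⧸ P)
  inferInstance

/-- Let `k` be a field of characteristic zero, `R` a finitely generated commutative
`k`-algebra, and `δ` a nonzero `k`-linear derivation of `R`.  Then the intersection
of all `δ`-invariant maximal ideals of `R` is a nonzero ideal (by convention the
unit ideal if there are no such maximal ideals); more precisely, if `δ(y) ≠ 0`
then `δ(y)` lies in every `δ`-invariant maximal ideal of `R`. -/
theorem inf_invariant_maximal_ideals_ne_bot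
    (k R : Type*) [Field k] [CharZero k] [CommRing R] [Algebra k R]
    [Algebra.FiniteType k R]
    (δ : Derivation k R R) (hδ : δ ≠ 0) :
    sInf {P : Ideal R | P.IsMaximal ∧ ∀ x ∈ P, δ x ∈ P} ≠ ⊥ ∧
      ∀ y : R, δ y ≠ 0 →
        ∀ P : Ideal R, P.IsMaximal → (∀ x ∈ P, δ x ∈ P) → δ y ∈ P := by
  have hmem : ∀ y : R, ∀ P : Ideal R, P.IsMaximal → (∀ x ∈ P, δ x ∈ P) → δ y ∈ P :=
    fun y P hP hinv ↦
      haveI := hP.isPrime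
      haveI := hP.isSeparable_quotient (k := k)
      δ.apply_mem_of_isSeparable hinv (Algebra.IsSeparable.isSeparable k _)
  refine ⟨fun hbot ↦ hδ ?_, fun y _ ↦ hmem y⟩
  ext y
  have hy : δ y ∈ sInf {P : Ideal R | P.IsMaximal ∧ ∀ x ∈ P, δ x ∈ P} :=
    Ideal.mem_sInf.mpr fun P ⟨hP, hinv⟩ ↦ hmem y P hP hinv
  simpa [hbot] using hy
end

section
/- Let k be a field of characteristic zero, let R be a finitely generated commutative k-algebra that is an integral domain of Krull dimension at most two, and let δ be a nonzero k-linear derivation of R. Suppose that R has only finitely many height-one δ-invariant prime ideals. Then the intersection of all nonzero δ-invariant prime ideals of R is nonzero. -/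
/-!
A nonzero invariant prime `P` either has height one, and then is one of finitely many primes, or
contains a nonzero prime and so is maximal because `dim R ≤ 2`. An invariant maximal ideal `M`
contains the whole image of `δ`: by the Nullstellensatz `R ⧸ M` is finite over `k`, and
differentiating the minimal polynomial `p` of `y mod M` gives `p'(y) δ y ∈ M` with `p'(y) ∉ M`
by separability. Hence `c * δ y` lies in every nonzero invariant prime, where `δ y ≠ 0` and `c`
is a nonzero element of the (finite, hence nonzero) intersection of the height-one ones.
-/

open Polynomial

theorem Derivation.apply_mem_of_isMaximal {k R : Type*} [Field k] [CharZero k] [CommRing R]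
    [Algebra k R] [Algebra.FiniteType k R] (δ : Derivation k R R) {M : Ideal R} [M.IsMaximal]
    (hM : ∀ x ∈ M, δ x ∈ M) (y : R) : δ y ∈ M := by
  let : Field (R ⧸ M) := Ideal.Quotient.field M
  have : Module.Finite k (R ⧸ M) := finite_of_finite_type_of_isJacobsonRing k (R ⧸ M)
  have hmk (q : k[X]) : Ideal.Quotient.mk M (aeval y q) = aeval (Ideal.Quotient.mk M y) q :=
    (aeval_algHom_apply (Ideal.Quotient.mkₐ k M) y q).symm
  set p := minpoly k (Ideal.Quotient.mk M y)
  have hp : aeval y p ∈ M := by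
    rw [← Ideal.Quotient.eq_zero_iff_mem, hmk, minpoly.aeval]
  have hp' : aeval y (derivative p) ∉ M := by
    rw [← Ideal.Quotient.eq_zero_iff_mem, hmk]
    exact (Algebra.IsSeparable.isSeparable k _).aeval_derivative_ne_zero (minpoly.aeval k _)
  have hδp := hM _ hp
  rw [Derivation.map_aeval, smul_eq_mul] at hδp
  exact (Ideal.IsPrime.mem_or_mem inferInstance hδp).resolve_left hp'

theorem Ideal.isMaximal_of_lt_of_lt_of_ringKrullDim_le_two {R : Type*} [CommRing R]
    (hdim : ringKrullDim R ≤ 2)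
    {P Q M : Ideal R} [P.IsPrime] [Q.IsPrime] [M.IsPrime] (hPQ : P < Q) (hQM : Q < M) :
    M.IsMaximal := by
  by_contra hmax
  obtain ⟨N, hN, hMN⟩ := Ideal.exists_le_maximal M IsPrime.ne_top'
  have hMN : M < N := lt_of_le_of_ne hMN fun h ↦ hmax (h ▸ hN)
  let chain : LTSeries (PrimeSpectrum R) :=
    (((RelSeries.singleton _ (⟨P, inferInstance⟩ : PrimeSpectrum R)).snoc ⟨Q, inferInstance⟩
      (by exact hPQ)).snoc ⟨M, inferInstance⟩ (by exact hQM)).snoc ⟨N, hN.isPrime⟩ (by exact hMN)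
  have hlen : (chain.length : WithBot ℕ∞) = 3 := rfl
  have := (Order.LTSeries.length_le_krullDim chain).trans hdim
  rw [hlen] at this
  norm_num at this

theorem Ideal.sInf_ne_bot_of_finite {R : Type*} [CommRing R] [IsDomain R] {S : Set (Ideal R)}
    (hS : S.Finite) (hS₀ : ∀ I ∈ S, I ≠ ⊥) : sInf S ≠ ⊥ := by
  have hprod : hS.toFinset.prod id ≠ ⊥ :=
    Finset.prod_ne_zero_iff.mpr fun I hI ↦ hS₀ I (hS.mem_toFinset.mp hI)
  refine ne_bot_of_le_ne_bot hprod (prod_le_inf.trans ?_)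
  rw [Finset.inf_id_eq_sInf, hS.coe_toFinset]

/-- Let `k` be a field of characteristic zero and let `R` be a finitely generated
commutative `k`-algebra that is an integral domain of Krull dimension at most two.
Let `δ` be a nonzero `k`-linear derivation of `R`, and suppose that `R` has only
finitely many height-one `δ`-invariant prime ideals (in a domain, a prime `P` has
height one iff `P ≠ ⊥` and the only prime strictly contained in `P` is `⊥`).
Then the intersection of all nonzero `δ`-invariant prime ideals of `R` is nonzero. -/
theorem inf_nonzero_invariant_primes_ne_bot
    (k R : Type*) [Field k] [CharZero k] [CommRing R] [IsDomain R]
    [Algebra k R] [Algebra.FiniteType k R]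
    (hdim : ringKrullDim R ≤ 2)
    (δ : Derivation k R R) (hδ : δ ≠ 0)
    (hfin : {P : Ideal R | P.IsPrime ∧ P ≠ ⊥ ∧
        (∀ Q : Ideal R, Q.IsPrime → Q < P → Q = ⊥) ∧
        ∀ x ∈ P, δ x ∈ P}.Finite) :
    sInf {P : Ideal R | P.IsPrime ∧ P ≠ ⊥ ∧ ∀ x ∈ P, δ x ∈ P} ≠ ⊥ := by
  obtain ⟨c, hc, hc₀⟩ := Submodule.exists_mem_ne_zero_of_ne_bot
    (Ideal.sInf_ne_bot_of_finite hfin fun P hP ↦ hP.2.1)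
  obtain ⟨y, hy⟩ := DFunLike.ne_iff.mp hδ
  refine (Submodule.ne_bot_iff _).mpr ⟨c * δ y, Submodule.mem_sInf.mpr ?_, mul_ne_zero hc₀ hy⟩
  rintro P ⟨hP, hP₀, hPδ⟩
  by_cases hheight : ∀ Q : Ideal R, Q.IsPrime → Q < P → Q = ⊥
  · exact Ideal.mul_mem_right _ P (Submodule.mem_sInf.mp hc P ⟨hP, hP₀, hheight, hPδ⟩)
  · push Not at hheight
    obtain ⟨Q, hQ, hQP, hQ₀⟩ := hheight
    have : Ideal.IsMaximal P :=
      Ideal.isMaximal_of_lt_of_lt_of_ringKrullDim_le_two hdim (bot_lt_iff_ne_bot.mpr hQ₀) hQP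
    exact Ideal.mul_mem_left P _ (δ.apply_mem_of_isMaximal hPδ y)
end

section
/- Let k be an algebraically closed field, let R be a commutative k-algebra, let σ be a k-algebra automorphism of R that preserves a frame, and let δ be a k-linear σ-derivation of R. Assume σ is not the identity map, δ is not inner, and R is σ-prime. Then δ(r) = 0 for every r ∈ R with σ(r) = r; equivalently, the fixed subring R_0 = {r ∈ R : σ(r) = r} is central in the Ore extension R[x; σ, δ]. -/
/-- Let `k` be an algebraically closed field, `R` a commutative `k`-algebra, `σ` a
`k`-algebra automorphism of `R` preserving a frame, and `δ` a `k`-linear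
`σ`-derivation of `R`.  If `σ` is not the identity, `δ` is not inner, and `R` is
`σ`-prime, then `δ(r) = 0` for every `σ`-fixed `r ∈ R` (equivalently, the fixed
subring `R₀ = {r : σ(r) = r}` is central in the Ore extension `R[x; σ, δ]`). -/
theorem fixed_ring_central
    (k R : Type*) [Field k] [IsAlgClosed k] [CommRing R] [Algebra k R]
    (σ : R ≃ₐ[k] R) (δ : R →ₗ[k] R)
    (hδ : ∀ a b : R, δ (a * b) = σ a * δ b + δ a * b)
    (hframe : ∃ V : Submodule k R, IsFrame k V ∧ V.map σ.toLinearMap = V)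
    (hσ : σ ≠ AlgEquiv.refl)
    (hnotinner : ¬ ∃ a : R, ∀ r : R, δ r = a * r - σ r * a)
    (hsigmaprime : ∀ I J : Ideal R, I.map σ = I → J.map σ = J →
      I * J = ⊥ → I = ⊥ ∨ J = ⊥) :
    ∀ r : R, σ r = r → δ r = 0 := by
  intro r hr
  -- Key identity from commutativity: (σ a - a) * δ b = (σ b - b) * δ a
  have key : ∀ a b : R, (σ a - a) * δ b = (σ b - b) * δ a := by
    intro a b
    have h1 := hδ a b
    have h2 := hδ b a
    rw [mul_comm b a] at h2
    have h3 : σ a * δ b + δ a * b = σ b * δ a + δ b * a := by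
      rw [← h1, h2]
    linear_combination h3
  -- The set of twisted commutators
  set S : Set R := {x | ∃ a : R, σ a - a = x} with hS
  have hSσ : σ '' S = S := by
    apply Set.eq_of_subset_of_subset
    · rintro _ ⟨_, ⟨a, rfl⟩, rfl⟩
      exact ⟨σ a, by simp [map_sub]⟩
    · rintro _ ⟨a, rfl⟩
      exact ⟨a - σ.symm a, ⟨σ.symm a, by simp⟩, by simp [map_sub]⟩
  set I : Ideal R := Ideal.span S with hI
  have hIσ : I.map σ = I := by
    rw [hI, Ideal.map_span, hSσ]
  -- J = annihilator of I
  set J : Ideal R := { carrier := {x | ∀ y ∈ I, x * y = 0}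
                       add_mem' := by
                         intro a b ha hb y hy
                         rw [add_mul, ha y hy, hb y hy, add_zero]
                       zero_mem' := by intro y hy; rw [zero_mul]
                       smul_mem' := by
                         intro c x hx y hy
                         show c * x * y = 0
                         rw [mul_assoc, hx y hy, mul_zero] } with hJ
  have hJmem : ∀ x : R, x ∈ J ↔ ∀ y ∈ I, x * y = 0 := fun x => Iff.rfl
  have hJσ : J.map σ = J := by
    apply le_antisymm
    · rw [Ideal.map_le_iff_le_comap]
      intro x hx
      rw [Ideal.mem_comap, hJmem]
      intro y hy
      have hy' : σ.symm y ∈ I := by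
        rw [← hIσ] at hy
        obtain ⟨z, hz, hzy⟩ := (Ideal.mem_map_iff_of_surjective σ σ.surjective).mp hy
        rwa [← hzy, σ.symm_apply_apply]
      have : σ x * y = σ (x * σ.symm y) := by
        rw [map_mul, σ.apply_symm_apply]
      rw [this, hx _ hy', map_zero]
    · intro x hx
      have hx' : σ.symm x ∈ J := by
        rw [hJmem]
        intro y hy
        have hy' : σ y ∈ I := by
          rw [← hIσ]
          exact Ideal.mem_map_of_mem σ hy
        have : σ (σ.symm x * y) = x * σ y := by
          rw [map_mul, σ.apply_symm_apply]
        have h0 := hx _ hy'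
        have := σ.injective (a₁ := σ.symm x * y) (a₂ := 0) (by rw [this, h0, map_zero])
        exact this
      have : x = σ (σ.symm x) := (σ.apply_symm_apply x).symm
      rw [this]
      exact Ideal.mem_map_of_mem σ hx'
  have hIJ : I * J = ⊥ := by
    rw [eq_bot_iff]
    refine Ideal.mul_le.mpr ?_
    intro i hi j hj
    rw [Ideal.mem_bot, mul_comm]
    exact hj i hi
  have hIne : I ≠ ⊥ := by
    intro hbot
    apply hσ
    ext a
    have ha : σ a - a ∈ I := Ideal.subset_span ⟨a, rfl⟩
    rw [hbot, Ideal.mem_bot, sub_eq_zero] at ha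
    simpa using ha
  have hδrJ : δ r ∈ J := by
    rw [hJmem]
    intro y hy
    induction hy using Submodule.span_induction with
    | mem x hx =>
        obtain ⟨a, rfl⟩ := hx
        rw [mul_comm, key a r, hr, sub_self, zero_mul]
    | zero => rw [mul_zero]
    | add x y _ _ hx hy => rw [mul_add, hx, hy, add_zero]
    | smul c x _ hx =>
        rw [smul_eq_mul, show δ r * (c * x) = c * (δ r * x) by ring, hx, mul_zero]
  rcases hsigmaprime I J hIσ hJσ hIJ with h | h
  · exact absurd h hIne
  · rw [h, Ideal.mem_bot] at hδrJ
    exact hδrJ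
end
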